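/- The extended (1+1) Galilei algebra L with brackets [e₃,e₁] = e₂, [e₃,e₂] = e₄, [e₁,e₂] = 0, e₄ central, equipped with the r-matrix r = e₁∧e₂ − e₃∧e₄, induces on its dual the brackets [e²,e⁴]* = e¹, [e¹,e⁴]* = e³, [e¹,e²]* = 0, e³ central; this dual Lie algebra is isomorphic to L itself (the bialgebra is self-dual). -/
import Mathlib


noncomputable section

/-- `e i` is the `i`-th standard basis vector (also used for the dual basis `eⁱ`). -/
def e (i : Fin 4) : Fin 4 → ℂ := fun j => if j = i then 1 else 0

/-- Bilinear bracket determined by structure constants `c`: `[e i, e j] = ∑ k, c i j k • e k`. -/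
def bra (c : Fin 4 → Fin 4 → Fin 4 → ℂ) (x y : Fin 4 → ℂ) : Fin 4 → ℂ :=
  fun k => ∑ i, ∑ j, x i * y j * c i j k

/-- Coordinates of the cobracket `δ(x) = [x⊗1 + 1⊗x, r]` where the r-matrix has
coordinates `ρ`, i.e. `r = ∑ ρ i j • e i ⊗ e j`. -/
def cob (c : Fin 4 → Fin 4 → Fin 4 → ℂ) (ρ : Fin 4 → Fin 4 → ℂ) (x : Fin 4 → ℂ) :
    Fin 4 → Fin 4 → ℂ :=
  fun a b => ∑ i, ∑ j, ρ i j * (bra c x (e i) a * e j b + e i a * bra c x (e j) b)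

/-- The induced bracket on the dual space: `⟨[ξ,η]*, e k⟩ = ⟨ξ ⊗ η, δ(e k)⟩`. -/
def dbra (c : Fin 4 → Fin 4 → Fin 4 → ℂ) (ρ : Fin 4 → Fin 4 → ℂ) (ξ η : Fin 4 → ℂ) :
    Fin 4 → ℂ :=
  fun k => ∑ a, ∑ b, ξ a * η b * cob c ρ (e k) a b

/-- Coordinates of the Schouten bracket
`[r,r]ₛ = [r₁₂,r₁₃] + [r₁₂,r₂₃] + [r₁₃,r₂₃]` in `L⊗L⊗L`. -/
def sch (c : Fin 4 → Fin 4 → Fin 4 → ℂ) (ρ : Fin 4 → Fin 4 → ℂ) :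
    Fin 4 → Fin 4 → Fin 4 → ℂ :=
  fun p q s => ∑ i, ∑ j, ∑ k, ∑ l, ρ i j * ρ k l *
    (c i k p * e j q * e l s + e i p * c j k q * e l s + e i p * e k q * c j l s)

/-- Structure constants of the extended (1+1) Galilei algebra:
`[e₃,e₁] = e₂`, `[e₃,e₂] = e₄`, `[e₁,e₂] = 0`, `e₄` central. -/
def cg : Fin 4 → Fin 4 → Fin 4 → ℂ := fun i j k =>
  (if i = 2 ∧ j = 0 ∧ k = 1 then 1 else if i = 2 ∧ j = 1 ∧ k = 3 then 1 else 0)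
  - (if j = 2 ∧ i = 0 ∧ k = 1 then 1 else if j = 2 ∧ i = 1 ∧ k = 3 then 1 else 0)

/-- The r-matrix `r = e₁∧e₂ − e₃∧e₄`. -/
def ρg : Fin 4 → Fin 4 → ℂ := fun p q =>
  (if p = 0 ∧ q = 1 then 1 else if p = 2 ∧ q = 3 then -1 else 0)
  - (if q = 0 ∧ p = 1 then 1 else if q = 2 ∧ p = 3 then -1 else 0)


/-- The self-duality isomorphism: `e₁↦e₂, e₂↦e₁, e₃↦-e₄, e₄↦e₃`. -/
def Sdual : (Fin 4 → ℂ) ≃ₗ[ℂ] (Fin 4 → ℂ) where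
  toFun x := ![x 1, x 0, x 3, -x 2]
  invFun y := ![y 1, y 0, -y 3, y 2]
  map_add' x y := by funext k; fin_cases k <;> simp <;> ring
  map_smul' c x := by funext k; fin_cases k <;> simp <;> ring
  left_inv x := by funext k; fin_cases k <;> simp
  right_inv y := by funext k; fin_cases k <;> simp

/-- The extended (1+1) Galilei algebra with `r = e₁∧e₂ − e₃∧e₄` induces on its dual
the brackets `[e²,e⁴]* = e¹`, `[e¹,e⁴]* = e³`, `[e¹,e²]* = 0`, with `e³` central, and
the dual Lie algebra is isomorphic to the original algebra (self-duality). -/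


theorem galilei_self_dual :
    dbra cg ρg (e 1) (e 3) = e 0 ∧
    dbra cg ρg (e 0) (e 3) = e 2 ∧
    dbra cg ρg (e 0) (e 1) = 0 ∧
    (∀ ξ : Fin 4 → ℂ, dbra cg ρg (e 2) ξ = 0 ∧ dbra cg ρg ξ (e 2) = 0) ∧
    ∃ S : (Fin 4 → ℂ) ≃ₗ[ℂ] (Fin 4 → ℂ),
      ∀ x y : Fin 4 → ℂ, S (bra cg x y) = dbra cg ρg (S x) (S y) := by
  refine ⟨?_, ?_, ?_, ?_, ⟨Sdual, ?_⟩⟩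
  · funext k; fin_cases k <;>
      simp [dbra, cob, bra, cg, ρg, e, Fin.sum_univ_four] <;> norm_num
  · funext k; fin_cases k <;>
      simp [dbra, cob, bra, cg, ρg, e, Fin.sum_univ_four] <;> norm_num
  · funext k; fin_cases k <;>
      simp [dbra, cob, bra, cg, ρg, e, Fin.sum_univ_four] <;> norm_num
  · intro ξ
    constructor <;> funext k <;> fin_cases k <;>
      simp [dbra, cob, bra, cg, ρg, e, Fin.sum_univ_four] <;> ring
  · intro x y
    funext k
    fin_cases k <;>
      simp [Sdual, dbra, cob, bra, cg, ρg, e, Fin.sum_univ_four] <;> ring
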